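/- For every positive integer m, ∫_{0}^{π} u·(sin(mu/2)/sin(u/2))^4 du ≤ (π⁴·ln 2 / 4)·m². -/

import Mathlib

/-!
Split `[0, π]` at `π / m`. Since `|sin (m x)| ≤ m |sin x|`, the kernel is at most `m⁴`, so the
piece near the origin contributes at most `π² m² / 2`. On the rest, Jordan's inequality
`u / π ≤ sin (u / 2)` bounds the kernel by `(π / u)⁴`, and `∫_{π/m}^π π⁴ u⁻³ du ≤ π² m² / 2` as
well. Finally `π² ≤ π⁴ ln 2 / 4`, since `π² ln 2 > 9 · 0.69 > 4`.
-/

open MeasureTheory Real Set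

/-- Where `sin (u / 2) = 0` this is `0` rather than the continuous extension `m⁴`; integrals do not
see the difference. -/
noncomputable def jacksonKernel (m : ℕ) (u : ℝ) : ℝ := (sin (m * u / 2) / sin (u / 2)) ^ 4

theorem abs_sin_nat_mul_le (n : ℕ) (x : ℝ) : |sin (n * x)| ≤ n * |sin x| := by
  induction n with
  | zero => simp
  | succ n ih =>
    calc |sin ((n + 1 : ℕ) * x)| = |sin (n * x) * cos x + cos (n * x) * sin x| := by
          push_cast; rw [add_mul, one_mul, sin_add]
      _ ≤ |sin (n * x)| * |cos x| + |cos (n * x)| * |sin x| := by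
          rw [← abs_mul, ← abs_mul]
          exact abs_add_le _ _
      _ ≤ n * |sin x| * 1 + 1 * |sin x| := by
          gcongr
          exacts [abs_cos_le_one x, abs_cos_le_one _]
      _ = (n + 1 : ℕ) * |sin x| := by push_cast; ring

theorem abs_sin_nat_mul_div_sin_le (n : ℕ) (x : ℝ) : |sin (n * x) / sin x| ≤ n := by
  rcases eq_or_ne (sin x) 0 with h | h
  · simp [h]
  · rw [abs_div, div_le_iff₀ (abs_pos.mpr h)]
    exact abs_sin_nat_mul_le n x

theorem jacksonKernel_nonneg (m : ℕ) (u : ℝ) : 0 ≤ jacksonKernel m u := by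
  unfold jacksonKernel
  positivity

theorem jacksonKernel_le_pow_four (m : ℕ) (u : ℝ) : jacksonKernel m u ≤ m ^ 4 := by
  have h := abs_sin_nat_mul_div_sin_le m (u / 2)
  rw [← mul_div_assoc] at h
  calc jacksonKernel m u = |sin (m * u / 2) / sin (u / 2)| ^ 4 :=
        (Even.pow_abs ⟨2, rfl⟩ _).symm
    _ ≤ m ^ 4 := pow_le_pow_left₀ (abs_nonneg _) h 4

theorem jacksonKernel_le_pi_div_pow_four {m : ℕ} {u : ℝ} (hu : u ∈ Ioc 0 π) :
    jacksonKernel m u ≤ (π / u) ^ 4 := by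
  have hjordan : u / π ≤ sin (u / 2) := by
    calc u / π = 2 / π * (u / 2) := by ring
      _ ≤ sin (u / 2) := mul_le_sin (by linarith [hu.1]) (by linarith [hu.2])
  have hnum : sin (m * u / 2) ^ 4 ≤ 1 := by
    rw [← Even.pow_abs ⟨2, rfl⟩]
    exact pow_le_one₀ (abs_nonneg _) (abs_sin_le_one _)
  have hpos : 0 < u / π := div_pos hu.1 pi_pos
  calc jacksonKernel m u = sin (m * u / 2) ^ 4 / sin (u / 2) ^ 4 := div_pow _ _ _
    _ ≤ 1 / (u / π) ^ 4 :=
        div_le_div₀ zero_le_one hnum (by positivity) (pow_le_pow_left₀ hpos.le hjordan 4)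
    _ = (π / u) ^ 4 := by rw [one_div, ← inv_pow, inv_div]

theorem intervalIntegrable_mul_jacksonKernel (m : ℕ) (a b : ℝ) :
    IntervalIntegrable (fun u => u * jacksonKernel m u) volume a b := by
  have hbound : Continuous fun u : ℝ => ‖u‖ * (m : ℝ) ^ 4 := by fun_prop
  refine (hbound.intervalIntegrable a b).mono_fun' ?_ ?_
  · unfold jacksonKernel
    fun_prop
  · refine Filter.Eventually.of_forall fun u => ?_
    dsimp only
    rw [norm_mul, Real.norm_of_nonneg (jacksonKernel_nonneg m u)]
    exact mul_le_mul_of_nonneg_left (jacksonKernel_le_pow_four m u) (norm_nonneg u)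

theorem integral_mul_jacksonKernel_near_zero_le {m : ℕ} (hm : 0 < m) :
    ∫ u in 0..π / m, u * jacksonKernel m u ≤ π ^ 2 * m ^ 2 / 2 :=
  calc ∫ u in 0..π / m, u * jacksonKernel m u ≤ ∫ u in 0..π / m, u * m ^ 4 :=
        intervalIntegral.integral_mono_on (by positivity)
          (intervalIntegrable_mul_jacksonKernel m _ _)
          (intervalIntegral.intervalIntegrable_id.mul_const _) fun u hu =>
            mul_le_mul_of_nonneg_left (jacksonKernel_le_pow_four m u) hu.1
    _ = π ^ 2 * m ^ 2 / 2 := by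
        rw [intervalIntegral.integral_mul_const, integral_id]
        field_simp
        ring

theorem integral_mul_jacksonKernel_away_from_zero_le {m : ℕ} (hm : 0 < m) :
    ∫ u in π / m..π, u * jacksonKernel m u ≤ π ^ 2 * m ^ 2 / 2 := by
  have hpim : 0 < π / m := by positivity
  have hle : π / m ≤ π := div_le_self pi_pos.le (by exact_mod_cast hm)
  have h0 : (0 : ℝ) ∉ uIcc (π / m) π := by
    rw [uIcc_of_le hle]
    exact fun h => hpim.not_ge h.1
  have hbound : ∀ u ∈ Icc (π / m) π, u * jacksonKernel m u ≤ π ^ 4 * u ^ (-3 : ℤ) := by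
    intro u hu
    have hu0 : 0 < u := hpim.trans_le hu.1
    calc u * jacksonKernel m u ≤ u * (π / u) ^ 4 :=
          mul_le_mul_of_nonneg_left (jacksonKernel_le_pi_div_pow_four ⟨hu0, hu.2⟩) hu0.le
      _ = π ^ 4 * u ^ (-3 : ℤ) := by
          rw [zpow_neg, zpow_ofNat]
          field_simp
  calc ∫ u in π / m..π, u * jacksonKernel m u ≤ ∫ u in π / m..π, π ^ 4 * u ^ (-3 : ℤ) :=
        intervalIntegral.integral_mono_on hle (intervalIntegrable_mul_jacksonKernel m _ _)
          (ContinuousOn.intervalIntegrable <| continuousOn_const.mul <|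
            continuousOn_id.zpow₀ _ fun u hu => Or.inl (ne_of_mem_of_not_mem hu h0)) hbound
    _ = π ^ 2 * m ^ 2 / 2 - π ^ 2 / 2 := by
        rw [intervalIntegral.integral_const_mul, integral_zpow (Or.inr ⟨by norm_num, h0⟩)]
        norm_num [zpow_neg]
        field_simp
        ring
    _ ≤ π ^ 2 * m ^ 2 / 2 := by linarith [sq_nonneg π]

theorem four_le_pi_sq_mul_log_two : 4 ≤ π ^ 2 * log 2 := by
  nlinarith [pi_gt_three, log_two_gt_d9]

/-- **First-moment bound for the Jackson kernel:**
`∫_0^π u·(sin(mu/2)/sin(u/2))^4 du ≤ (π⁴·ln 2/4)·m²`. -/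
theorem integral_mul_jacksonKernel_le (m : ℕ) (hm : 0 < m) :
    ∫ u in (0 : ℝ)..Real.pi, u * (Real.sin (m * u / 2) / Real.sin (u / 2)) ^ 4
      ≤ (Real.pi ^ 4 * Real.log 2 / 4) * (m : ℝ) ^ 2 := by
  change ∫ u in 0..π, u * jacksonKernel m u ≤ _
  rw [← intervalIntegral.integral_add_adjacent_intervals
    (intervalIntegrable_mul_jacksonKernel m 0 (π / m)) (intervalIntegrable_mul_jacksonKernel m _ π)]
  have hconst := mul_le_mul_of_nonneg_left four_le_pi_sq_mul_log_two (sq_nonneg (π * m))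
  linarith [integral_mul_jacksonKernel_near_zero_le hm,
    integral_mul_jacksonKernel_away_from_zero_le hm]
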